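/- arXiv:1412.0137 — 2 statements merged into one kernel-verified Lean document; each statement's English description precedes it below -/
import Mathlib

section
/- Let 𝔏 be an infinite set of pairwise distinct lines in ℝ², and let Sing(𝔏) be the set of points of ℝ² lying on at least two distinct lines of 𝔏. Then the cardinality of Sing(𝔏) is 0, 1, or infinite; equivalently, if Sing(𝔏) is finite and contains at least two points, one obtains a contradiction. -/
open MvPolynomial

/-- Evaluation of a bivariate polynomial at a point of `ℝ × ℝ`
(the variable `X 0` is `x`, the variable `X 1` is `y`). -/
noncomputable def pev (P : MvPolynomial (Fin 2) ℝ) (q : ℝ × ℝ) : ℝ :=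
  MvPolynomial.eval ![q.1, q.2] P

/-- The line `{(x, y) | a * x + b * y + c = 0}`. -/
def lineSet (a b c : ℝ) : Set (ℝ × ℝ) := {q : ℝ × ℝ | a * q.1 + b * q.2 + c = 0}

/-- A subset of `ℝ²` is a line if it is the zero set of an affine form
`a * x + b * y + c` with `(a, b) ≠ (0, 0)`. -/
def IsLine (L : Set (ℝ × ℝ)) : Prop :=
  ∃ a b c : ℝ, (a, b) ≠ (0, 0) ∧ L = lineSet a b c

/-- The line `L` is invariant by the polynomial vector field `χ = P ∂x + Q ∂y`:
for a defining affine form `a * x + b * y + c` of `L`, the polynomial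
`a * P + b * Q` vanishes at every point of `L`. -/
def InvLine (P Q : MvPolynomial (Fin 2) ℝ) (L : Set (ℝ × ℝ)) : Prop :=
  ∃ a b c : ℝ, (a, b) ≠ (0, 0) ∧ L = lineSet a b c ∧
    ∀ q ∈ L, a * pev P q + b * pev Q q = 0

/-- The set of singular points of a family of lines: points lying on at least two
distinct lines of the family. -/
def singSet (𝔏 : Set (Set (ℝ × ℝ))) : Set (ℝ × ℝ) :=
  {q : ℝ × ℝ | ∃ L ∈ 𝔏, ∃ L' ∈ 𝔏, L ≠ L' ∧ q ∈ L ∧ q ∈ L'}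

/-!
Suppose `Sing(𝔏)` is finite and has two points. Through a point of `Sing(𝔏)` pass two lines
of `𝔏`; by uniqueness of parallels every other line of `𝔏` meets one of them, so every line
of `𝔏` meets the finite set `Sing(𝔏)`. By pigeonhole, infinitely many lines of `𝔏` pass through
one singular point `s`. Since some other singular point lies on two lines of `𝔏`, one of them
misses `s`; it meets all but at most one of the lines through `s`, each at a different point,
producing infinitely many singular points.
-/

open Set

section Coordinates

variable {a b c a' b' c' : ℝ}

lemma mem_lineSet {q : ℝ × ℝ} : q ∈ lineSet a b c ↔ a * q.1 + b * q.2 + c = 0 := Iff.rfl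

lemma lineSet_subset_of_det_eq_zero (hab : (a, b) ≠ (0, 0)) (hdet : a * b' - b * a' = 0)
    {q : ℝ × ℝ} (hq : q ∈ lineSet a b c) (hq' : q ∈ lineSet a' b' c') :
    lineSet a b c ⊆ lineSet a' b' c' := by
  intro x hx
  simp only [mem_lineSet] at hx hq hq' ⊢
  have hx : a * (x.1 - q.1) + b * (x.2 - q.2) = 0 := by linarith
  suffices a' * (x.1 - q.1) + b' * (x.2 - q.2) = 0 by linarith
  by_cases ha : a = 0
  · have hb : b ≠ 0 := by rintro rfl; exact hab (by rw [ha])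
    refine (mul_eq_zero.mp ?_).resolve_left hb
    linear_combination b' * hx - (x.1 - q.1) * hdet
  · refine (mul_eq_zero.mp ?_).resolve_left ha
    linear_combination a' * hx + (x.2 - q.2) * hdet

lemma lineSet_eq_of_det_eq_zero (hab : (a, b) ≠ (0, 0)) (hab' : (a', b') ≠ (0, 0))
    (hdet : a * b' - b * a' = 0) {q : ℝ × ℝ} (hq : q ∈ lineSet a b c)
    (hq' : q ∈ lineSet a' b' c') : lineSet a b c = lineSet a' b' c' :=
  (lineSet_subset_of_det_eq_zero hab hdet hq hq').antisymm
    (lineSet_subset_of_det_eq_zero hab' (by linear_combination -hdet) hq' hq)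

/-- Cramer's rule. -/
lemma exists_mem_lineSet_of_det_ne_zero (hdet : a * b' - b * a' ≠ 0) :
    ∃ q : ℝ × ℝ, q ∈ lineSet a b c ∧ q ∈ lineSet a' b' c' := by
  refine ⟨((b * c' - b' * c) / (a * b' - b * a'), (a' * c - a * c') / (a * b' - b * a')), ?_, ?_⟩
  all_goals
    rw [mem_lineSet, div_eq_mul_inv, div_eq_mul_inv]
  · linear_combination (-c) * mul_inv_cancel₀ hdet
  · linear_combination (-c') * mul_inv_cancel₀ hdet

lemma det_eq_zero_of_mem_lineSet_of_ne {q₁ q₂ : ℝ × ℝ} (hne : q₁ ≠ q₂)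
    (h₁ : q₁ ∈ lineSet a b c) (h₂ : q₂ ∈ lineSet a b c)
    (h₁' : q₁ ∈ lineSet a' b' c') (h₂' : q₂ ∈ lineSet a' b' c') :
    a * b' - b * a' = 0 := by
  simp only [mem_lineSet] at h₁ h₂ h₁' h₂'
  have e : a * (q₂.1 - q₁.1) + b * (q₂.2 - q₁.2) = 0 := by linarith
  have e' : a' * (q₂.1 - q₁.1) + b' * (q₂.2 - q₁.2) = 0 := by linarith
  by_cases hx : q₂.1 - q₁.1 = 0
  · have hy : q₂.2 - q₁.2 ≠ 0 := fun hy =>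
      hne (Prod.ext (by linarith) (by linarith))
    refine (mul_eq_zero.mp ?_).resolve_right hy
    linear_combination a * e' - a' * e
  · refine (mul_eq_zero.mp ?_).resolve_right hx
    linear_combination b' * e - b * e'

end Coordinates

namespace IsLine

variable {L L' M₁ M₂ : Set (ℝ × ℝ)}

lemma inter_subsingleton (hL : IsLine L) (hL' : IsLine L') (hne : L ≠ L') :
    (L ∩ L').Subsingleton := by
  rintro x ⟨hxL, hxL'⟩ y ⟨hyL, hyL'⟩
  by_contra hxy
  obtain ⟨a, b, c, hab, rfl⟩ := hL
  obtain ⟨a', b', c', hab', rfl⟩ := hL'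
  exact hne (lineSet_eq_of_det_eq_zero hab hab'
    (det_eq_zero_of_mem_lineSet_of_ne hxy hxL hyL hxL' hyL') hxL hxL')

/-- Uniqueness of parallels. -/
lemma eq_of_disjoint_of_disjoint (hL : IsLine L) (h₁ : IsLine M₁) (h₂ : IsLine M₂)
    (hd₁ : Disjoint M₁ L) (hd₂ : Disjoint M₂ L) {q : ℝ × ℝ} (hq₁ : q ∈ M₁) (hq₂ : q ∈ M₂) :
    M₁ = M₂ := by
  obtain ⟨a, b, c, hab, rfl⟩ := hL
  obtain ⟨a₁, b₁, c₁, hab₁, rfl⟩ := h₁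
  obtain ⟨a₂, b₂, c₂, hab₂, rfl⟩ := h₂
  have hdet : ∀ {a' b' c' : ℝ}, Disjoint (lineSet a' b' c') (lineSet a b c) →
      a' * b - b' * a = 0 := fun hd => by
    by_contra hdet
    obtain ⟨u, hu, hu'⟩ := exists_mem_lineSet_of_det_ne_zero hdet
    exact disjoint_left.mp hd hu hu'
  have e₁ := hdet hd₁
  have e₂ := hdet hd₂
  refine lineSet_eq_of_det_eq_zero hab₁ hab₂ ?_ hq₁ hq₂
  by_cases ha : a = 0
  · have hb : b ≠ 0 := by rintro rfl; exact hab (by rw [ha])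
    refine (mul_eq_zero.mp ?_).resolve_right hb
    linear_combination b₂ * e₁ - b₁ * e₂
  · refine (mul_eq_zero.mp ?_).resolve_right ha
    linear_combination a₂ * e₁ - a₁ * e₂

end IsLine

lemma Set.Infinite.exists_infinite_setOf_mem {α : Type*} {𝔏 : Set (Set α)} {S : Set α}
    (hinf : 𝔏.Infinite) (hS : S.Finite) (hmeet : ∀ M ∈ 𝔏, (S ∩ M).Nonempty) :
    ∃ s ∈ S, {M ∈ 𝔏 | s ∈ M}.Infinite := by
  by_contra! h
  refine hinf ((hS.biUnion h).subset fun M hM => ?_)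
  obtain ⟨s, hsS, hsM⟩ := hmeet M hM
  exact mem_biUnion hsS ⟨hM, hsM⟩

section singSet

variable {𝔏 : Set (Set (ℝ × ℝ))}

lemma singSet_inter_nonempty (hline : ∀ L ∈ 𝔏, IsLine L) (hS : (singSet 𝔏).Nonempty)
    {M : Set (ℝ × ℝ)} (hM : M ∈ 𝔏) : (singSet 𝔏 ∩ M).Nonempty := by
  obtain ⟨p, hp⟩ := hS
  by_cases hpM : p ∈ M
  · exact ⟨p, hp, hpM⟩
  obtain ⟨A, hA, B, hB, hAB, hpA, hpB⟩ := hp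
  have of_meet : ∀ L ∈ 𝔏, p ∈ L → ¬Disjoint L M → (singSet 𝔏 ∩ M).Nonempty :=
    fun L hL hpL hd => by
      obtain ⟨u, huL, huM⟩ := not_disjoint_iff.mp hd
      exact ⟨u, ⟨L, hL, M, hM, by rintro rfl; exact hpM hpL, huL, huM⟩, huM⟩
  by_cases hAM : Disjoint A M
  · exact of_meet B hB hpB fun hBM =>
      hAB ((hline M hM).eq_of_disjoint_of_disjoint (hline A hA) (hline B hB) hAM hBM hpA hpB)
  · exact of_meet A hA hpA hAM

lemma exists_notMem_of_mem_singSet (hline : ∀ L ∈ 𝔏, IsLine L) {s t : ℝ × ℝ}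
    (ht : t ∈ singSet 𝔏) (hts : t ≠ s) : ∃ N ∈ 𝔏, s ∉ N := by
  obtain ⟨A, hA, B, hB, hAB, htA, htB⟩ := ht
  by_contra! h
  exact hts ((hline A hA).inter_subsingleton (hline B hB) hAB ⟨htA, htB⟩ ⟨h A hA, h B hB⟩)

lemma singSet_infinite_of_infinite_setOf_mem (hline : ∀ L ∈ 𝔏, IsLine L) {s : ℝ × ℝ}
    (hs : {M ∈ 𝔏 | s ∈ M}.Infinite) {N : Set (ℝ × ℝ)} (hN : N ∈ 𝔏) (hsN : s ∉ N) :
    (singSet 𝔏).Infinite := by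
  intro hfin
  have hpar : {M ∈ 𝔏 | s ∈ M ∧ Disjoint M N}.Subsingleton := fun M₁ h₁ M₂ h₂ =>
    (hline N hN).eq_of_disjoint_of_disjoint (hline M₁ h₁.1) (hline M₂ h₂.1) h₁.2.2 h₂.2.2
      h₁.2.1 h₂.2.1
  have hjoin : ∀ u ∈ N, {M ∈ 𝔏 | s ∈ M ∧ u ∈ M}.Subsingleton := fun u hu M₁ h₁ M₂ h₂ => by
    by_contra hne
    have hsu : s = u := (hline M₁ h₁.1).inter_subsingleton (hline M₂ h₂.1) hne
      ⟨h₁.2.1, h₂.2.1⟩ ⟨h₁.2.2, h₂.2.2⟩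
    exact hsN (hsu ▸ hu)
  have hcover : {M ∈ 𝔏 | s ∈ M} ⊆
      {M ∈ 𝔏 | s ∈ M ∧ Disjoint M N} ∪ ⋃ u ∈ singSet 𝔏 ∩ N, {M ∈ 𝔏 | s ∈ M ∧ u ∈ M} := by
    rintro M ⟨hM, hsM⟩
    by_cases hMN : Disjoint M N
    · exact Or.inl ⟨hM, hsM, hMN⟩
    obtain ⟨u, huM, huN⟩ := not_disjoint_iff.mp hMN
    have hne : M ≠ N := by rintro rfl; exact hsN hsM
    exact Or.inr (mem_biUnion ⟨⟨M, hM, N, hN, hne, huM, huN⟩, huN⟩ ⟨hM, hsM, huM⟩)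
  refine hs ((hpar.finite.union ?_).subset hcover)
  exact (hfin.subset inter_subset_left).biUnion fun u hu => (hjoin u hu.2).finite

end singSet

/-- **Lemma.** For an infinite set `𝔏` of (pairwise distinct) lines in the plane,
the number of singular points of `𝔏` is `0`, `1` or infinite. -/
theorem singSet_trichotomy (𝔏 : Set (Set (ℝ × ℝ)))
    (hline : ∀ L ∈ 𝔏, IsLine L) (hinf : 𝔏.Infinite) :
    singSet 𝔏 = ∅ ∨ (∃ q : ℝ × ℝ, singSet 𝔏 = {q}) ∨ (singSet 𝔏).Infinite := by
  rcases (singSet 𝔏).eq_empty_or_nonempty with hempty | hS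
  · exact Or.inl hempty
  rcases hS.exists_eq_singleton_or_nontrivial with hsingle | hnt
  · exact Or.inr (Or.inl hsingle)
  refine Or.inr (Or.inr fun hfin => ?_)
  obtain ⟨s, -, hs⟩ := hinf.exists_infinite_setOf_mem hfin fun M hM =>
    singSet_inter_nonempty hline hS hM
  obtain ⟨t, ht, hts⟩ := hnt.exists_ne s
  obtain ⟨N, hN, hsN⟩ := exists_notMem_of_mem_singSet hline ht hts
  exact singSet_infinite_of_infinite_setOf_mem hline hs hN hsN hfin
end

section
/- Let A be a nonempty line arrangement in ℝ² with |A| = n lines, and let p(A) be the maximal number of pairwise parallel lines in A. Then the minimal degree of a nonzero parallel polynomial vector field fixing every line of A is exactly n − p(A): there exists a nonzero parallel vector field of degree n − p(A) fixing A, and every nonzero parallel vector field fixing A has degree at least n − p(A). -/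
open MvPolynomial

/-- A nonzero polynomial vector field `(P, Q)` is central if there is a center
`(x₀, y₀)` with `(x - x₀) * Q = (y - y₀) * P` identically. -/
def IsCentral (P Q : MvPolynomial (Fin 2) ℝ) : Prop :=
  (P ≠ 0 ∨ Q ≠ 0) ∧ ∃ c : ℝ × ℝ, (X 0 - C c.1) * Q = (X 1 - C c.2) * P

/-- A nonzero polynomial vector field `(P, Q)` is parallel if there is a direction
`v ≠ (0, 0)` with `v₁ * Q = v₂ * P` identically. -/
def IsParallelVF (P Q : MvPolynomial (Fin 2) ℝ) : Prop :=
  (P ≠ 0 ∨ Q ≠ 0) ∧ ∃ v : ℝ × ℝ, v ≠ (0, 0) ∧ C v.1 * Q = C v.2 * P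

open scoped Classical in
/-- The number of lines of the arrangement `A` passing through the point `q`. -/
noncomputable def numThrough (A : Finset (Set (ℝ × ℝ))) (q : ℝ × ℝ) : ℕ :=
  (A.filter (fun L => q ∈ L)).card

/-- `mArr A` is the maximal number of lines of `A` passing through a common point. -/
noncomputable def mArr (A : Finset (Set (ℝ × ℝ))) : ℕ :=
  sSup (Set.range (numThrough A))

/-- Two lines are parallel if they are equal or disjoint. -/
def ParLines (L L' : Set (ℝ × ℝ)) : Prop := L = L' ∨ L ∩ L' = ∅

/-- `pArr A` is the maximal number of pairwise parallel lines in `A`. -/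
noncomputable def pArr (A : Finset (Set (ℝ × ℝ))) : ℕ :=
  sSup {k : ℕ | ∃ S : Finset (Set (ℝ × ℝ)), S ⊆ A ∧
    (∀ L ∈ S, ∀ L' ∈ S, ParLines L L') ∧ S.card = k}

/-!
A nonzero parallel field is `(w₁ f, w₂ f)` for a direction `w ≠ 0` and a polynomial `f ≠ 0`,
and a line is invariant by it iff the line is parallel to `w` or `f` vanishes on it. The lines of
`A` parallel to `w` are pairwise parallel, so there are at most `p(A)` of them; `f` vanishes on
all the others, so it is divisible by the product of their linear forms, which are pairwise
non-associated primes, and `deg f ≥ n - p(A)`. Conversely, for a largest family `S` of pairwise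
parallel lines of `A`, the direction of `S` times the product of the linear forms of the lines
outside `S` is a parallel field of degree `n - p(A)` fixing `A`.
-/

noncomputable def linForm (a b c : ℝ) : MvPolynomial (Fin 2) ℝ := C a * X 0 + C b * X 1 + C c

@[simp] lemma pev_C (r : ℝ) (q : ℝ × ℝ) : pev (C r) q = r := by simp [pev]

@[simp] lemma pev_mul (P Q : MvPolynomial (Fin 2) ℝ) (q : ℝ × ℝ) :
    pev (P * Q) q = pev P q * pev Q q := by simp [pev]

@[simp] lemma pev_linForm (a b c : ℝ) (q : ℝ × ℝ) :
    pev (linForm a b c) q = a * q.1 + b * q.2 + c := by simp [pev, linForm]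

def VanishesOn (f : MvPolynomial (Fin 2) ℝ) (L : Set (ℝ × ℝ)) : Prop := ∀ q ∈ L, pev f q = 0

lemma vanishesOn_linForm_iff {a b c : ℝ} {L : Set (ℝ × ℝ)} :
    VanishesOn (linForm a b c) L ↔ L ⊆ lineSet a b c := by
  simp [VanishesOn, Set.subset_def, lineSet]

lemma vanishesOn_linForm (a b c : ℝ) : VanishesOn (linForm a b c) (lineSet a b c) :=
  vanishesOn_linForm_iff.2 subset_rfl

lemma VanishesOn.of_dvd {f g : MvPolynomial (Fin 2) ℝ} {L : Set (ℝ × ℝ)} (hf : VanishesOn f L)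
    (h : f ∣ g) : VanishesOn g L := by
  obtain ⟨k, rfl⟩ := h
  intro q hq
  rw [pev_mul, hf q hq, zero_mul]

lemma coeff_single_linForm (a b c : ℝ) :
    (linForm a b c).coeff (Finsupp.single 0 1) = a ∧
      (linForm a b c).coeff (Finsupp.single 1 1) = b := by
  have h0 (i : Fin 2) : (0 : Fin 2 →₀ ℕ) ≠ Finsupp.single i 1 :=
    (Finsupp.single_ne_zero.2 one_ne_zero).symm
  simp [linForm, coeff_X, coeff_C, Finsupp.single_eq_single_iff, h0]

lemma totalDegree_linForm {a b c : ℝ} (hab : (a, b) ≠ (0, 0)) :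
    (linForm a b c).totalDegree = 1 := by
  refine le_antisymm ?_ (Nat.one_le_iff_ne_zero.2 fun h => hab ?_)
  · have hmono (r : ℝ) (i : Fin 2) : (C r * X i : MvPolynomial (Fin 2) ℝ).totalDegree ≤ 1 :=
      (totalDegree_mul _ _).trans (by simp [totalDegree_C, totalDegree_X])
    refine (totalDegree_add _ _).trans (max_le ((totalDegree_add _ _).trans
      (max_le (hmono a 0) (hmono b 1))) ?_)
    simp [totalDegree_C]
  · have hC := totalDegree_eq_zero_iff_eq_C.1 h
    obtain ⟨ha, hb⟩ := coeff_single_linForm a b c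
    rw [hC, coeff_C, if_neg (Finsupp.single_ne_zero.2 one_ne_zero).symm] at ha hb
    rw [← ha, ← hb]

lemma prime_linForm {a b c : ℝ} (hab : (a, b) ≠ (0, 0)) : Prime (linForm a b c) := by
  refine (irreducible_of_totalDegree_eq_one (totalDegree_linForm hab) fun r hr => ?_).prime
  obtain ⟨ha, hb⟩ := coeff_single_linForm a b c
  have hr0 : r ≠ 0 := by
    rintro rfl
    have h1 := hr (Finsupp.single 0 1)
    have h2 := hr (Finsupp.single 1 1)
    rw [ha, zero_dvd_iff] at h1
    rw [hb, zero_dvd_iff] at h2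
    exact hab (by rw [h1, h2])
  exact hr0.isUnit

lemma finSuccEquiv_linForm_one (b c : ℝ) :
    finSuccEquiv ℝ 1 (linForm 1 b c) = Polynomial.X - Polynomial.C (-(C b * X 0 + C c)) := by
  have h1 : (X 1 : MvPolynomial (Fin 2) ℝ) = X (Fin.succ 0) := rfl
  have hC (r : ℝ) : finSuccEquiv ℝ 1 (C r) = Polynomial.C (C r) := (finSuccEquiv ℝ 1).commutes r
  simp only [linForm, h1, map_add, map_mul, hC, finSuccEquiv_X_zero, finSuccEquiv_X_succ,
    map_one, Polynomial.C_neg]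
  ring

/-- As a polynomial in `x` over `ℝ[y]`, `P` has the root `x = -(b y + c)`. -/
lemma linForm_one_dvd {b c : ℝ} {P : MvPolynomial (Fin 2) ℝ}
    (h : VanishesOn P (lineSet 1 b c)) : linForm 1 b c ∣ P := by
  set r : MvPolynomial (Fin 1) ℝ := -(C b * X 0 + C c)
  have hroot : (finSuccEquiv ℝ 1 P).IsRoot r := by
    refine MvPolynomial.funext fun x => ?_
    have hx : eval x r = -(b * x 0 + c) := by simp [r]
    have hq := h (-(b * x 0 + c), x 0) (by simp only [lineSet, Set.mem_ofPred_eq]; ring)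
    rw [map_zero, ← Polynomial.eval₂_hom, Polynomial.eval₂_eq_eval_map,
      ← eval_eq_eval_mv_eval', hx, ← hq, pev]
    congr 2
    funext i; fin_cases i <;> rfl
  have hdvd := map_dvd (finSuccEquiv ℝ 1).symm (Polynomial.dvd_iff_isRoot.2 hroot)
  rwa [← finSuccEquiv_linForm_one, AlgEquiv.symm_apply_apply, AlgEquiv.symm_apply_apply] at hdvd

lemma linForm_dvd_of_ne_zero {a b c : ℝ} (ha : a ≠ 0) {P : MvPolynomial (Fin 2) ℝ}
    (h : VanishesOn P (lineSet a b c)) : linForm a b c ∣ P := by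
  have hscale : linForm a b c = C a * linForm 1 (b / a) (c / a) := by
    simp only [linForm, mul_add, ← mul_assoc, ← C_mul, mul_one, mul_div_cancel₀ _ ha]
  have hline : lineSet 1 (b / a) (c / a) ⊆ lineSet a b c := fun q hq => by
    simp only [lineSet, Set.mem_ofPred_eq] at hq ⊢
    field_simp at hq
    linear_combination hq
  rw [hscale]
  exact (ha.isUnit.map C).mul_left_dvd.2 (linForm_one_dvd fun q hq => h q (hline hq))

lemma rename_swap_linForm (a b c : ℝ) :
    rename (Equiv.swap 0 1) (linForm a b c) = linForm b a c := by
  simp only [linForm, map_add, map_mul, rename_C, rename_X, Equiv.swap_apply_left,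
    Equiv.swap_apply_right]
  ring

lemma pev_rename_swap (P : MvPolynomial (Fin 2) ℝ) (q : ℝ × ℝ) :
    pev (rename (Equiv.swap 0 1) P) q = pev P q.swap := by
  rw [pev, pev, eval_rename]
  congr 2
  funext i; fin_cases i <;> rfl

lemma linForm_dvd {a b c : ℝ} (hab : (a, b) ≠ (0, 0)) {P : MvPolynomial (Fin 2) ℝ}
    (h : VanishesOn P (lineSet a b c)) : linForm a b c ∣ P := by
  rcases ne_or_eq a 0 with ha | rfl
  · exact linForm_dvd_of_ne_zero ha h
  have hb : b ≠ 0 := fun hb => hab (by rw [hb])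
  obtain ⟨g, hg⟩ : linForm b 0 c ∣ rename (Equiv.swap 0 1) P :=
    linForm_dvd_of_ne_zero hb fun q hq => by
      rw [pev_rename_swap]
      exact h _ (by simpa [lineSet] using hq)
  refine ⟨rename (Equiv.swap 0 1) g, ?_⟩
  rw [← rename_swap_linForm, ← map_mul, ← hg, rename_rename,
    Function.Involutive.comp_self (Equiv.swap_apply_self 0 1), rename_id_apply]

lemma mem_lineSet_add_iff {a b c : ℝ} {q : ℝ × ℝ} (u : ℝ × ℝ) (hq : q ∈ lineSet a b c) :
    q + u ∈ lineSet a b c ↔ a * u.1 + b * u.2 = 0 := by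
  simp only [lineSet, Set.mem_ofPred_eq, Prod.fst_add, Prod.snd_add] at hq ⊢
  constructor <;> intro h
  · linear_combination h - hq
  · linear_combination h + hq

lemma lineSet_nonempty {a b c : ℝ} (hab : (a, b) ≠ (0, 0)) : (lineSet a b c).Nonempty := by
  have hd : a ^ 2 + b ^ 2 ≠ 0 := fun h => hab (by
    rw [Prod.mk.injEq]; constructor <;> nlinarith [sq_nonneg a, sq_nonneg b])
  refine ⟨(-(a * c) / (a ^ 2 + b ^ 2), -(b * c) / (a ^ 2 + b ^ 2)), ?_⟩
  simp only [lineSet, Set.mem_ofPred_eq]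
  field_simp
  ring

/-- In `ℝ²`, a vector orthogonal to `(a, b)` is parallel to `w`, hence orthogonal to `(a', b')`. -/
lemma orth_of_orth_of_orth {a b a' b' : ℝ} {u w : ℝ × ℝ} (hab : (a, b) ≠ (0, 0))
    (hw : w ≠ (0, 0)) (hw₁ : a * w.1 + b * w.2 = 0) (hw₂ : a' * w.1 + b' * w.2 = 0)
    (hu : a * u.1 + b * u.2 = 0) : a' * u.1 + b' * u.2 = 0 := by
  have hpar : u.1 * w.2 - u.2 * w.1 = 0 := by
    refine (smul_eq_zero.1 (Prod.ext ?_ ?_ : (u.1 * w.2 - u.2 * w.1) • (a, b) = 0)).resolve_right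
      hab
    · simp only [Prod.smul_mk, smul_eq_mul, Prod.fst_zero]
      linear_combination w.2 * hu - u.2 * hw₁
    · simp only [Prod.smul_mk, smul_eq_mul, Prod.snd_zero]
      linear_combination u.1 * hw₁ - w.1 * hu
  refine (smul_eq_zero.1 (Prod.ext ?_ ?_ : (a' * u.1 + b' * u.2) • w = 0)).resolve_right hw
  · simp only [Prod.smul_fst, smul_eq_mul, Prod.fst_zero]
    linear_combination u.1 * hw₂ - b' * hpar
  · simp only [Prod.smul_snd, smul_eq_mul, Prod.snd_zero]
    linear_combination u.2 * hw₂ + a' * hpar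

lemma lineSet_eq_of_orth {a b c a' b' c' : ℝ} {w q : ℝ × ℝ} (hab : (a, b) ≠ (0, 0))
    (hab' : (a', b') ≠ (0, 0)) (hw : w ≠ (0, 0)) (hw₁ : a * w.1 + b * w.2 = 0)
    (hw₂ : a' * w.1 + b' * w.2 = 0) (hq : q ∈ lineSet a b c) (hq' : q ∈ lineSet a' b' c') :
    lineSet a b c = lineSet a' b' c' := by
  ext p
  rw [← add_sub_cancel q p, mem_lineSet_add_iff _ hq, mem_lineSet_add_iff _ hq']
  exact ⟨orth_of_orth_of_orth hab hw hw₁ hw₂, orth_of_orth_of_orth hab' hw hw₂ hw₁⟩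

lemma parLines_of_orth {a b c a' b' c' : ℝ} {w : ℝ × ℝ} (hab : (a, b) ≠ (0, 0))
    (hab' : (a', b') ≠ (0, 0)) (hw : w ≠ (0, 0)) (hw₁ : a * w.1 + b * w.2 = 0)
    (hw₂ : a' * w.1 + b' * w.2 = 0) : ParLines (lineSet a b c) (lineSet a' b' c') := by
  rcases (lineSet a b c ∩ lineSet a' b' c').eq_empty_or_nonempty with h | ⟨q, hq, hq'⟩
  · exact Or.inr h
  · exact Or.inl (lineSet_eq_of_orth hab hab' hw hw₁ hw₂ hq hq')

/-- `(-b, a)` is a direction of `lineSet a b c`, and of every line parallel to it. -/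
lemma orth_of_parLines {a b c a' b' c' : ℝ} (hab : (a, b) ≠ (0, 0))
    (h : ParLines (lineSet a b c) (lineSet a' b' c')) : a' * -b + b' * a = 0 := by
  rcases h with h | h
  · obtain ⟨q, hq⟩ := lineSet_nonempty (c := c) hab
    have hdir : q + (-b, a) ∈ lineSet a b c := (mem_lineSet_add_iff _ hq).2 (by ring)
    rw [h] at hq hdir
    exact (mem_lineSet_add_iff _ hq).1 hdir
  · by_contra hD
    -- Cramer's rule gives the intersection point of two non-parallel lines.
    have hinv := mul_inv_cancel₀ hD
    have hq : ((b * c' - b' * c) * (a' * -b + b' * a)⁻¹, (a' * c - a * c') * (a' * -b + b' * a)⁻¹)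
        ∈ lineSet a b c ∩ lineSet a' b' c' := by
      simp only [lineSet, Set.mem_inter_iff, Set.mem_ofPred_eq]
      constructor
      · linear_combination (-c) * hinv
      · linear_combination (-c') * hinv
    rw [h] at hq
    exact hq

lemma lineSet_eq_of_subset {a b c a' b' c' : ℝ} (hab : (a, b) ≠ (0, 0))
    (hab' : (a', b') ≠ (0, 0)) (h : lineSet a' b' c' ⊆ lineSet a b c) :
    lineSet a b c = lineSet a' b' c' := by
  obtain ⟨q, hq⟩ := lineSet_nonempty (c := c') hab'
  have hdir : q + (-b', a') ∈ lineSet a' b' c' := (mem_lineSet_add_iff _ hq).2 (by ring)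
  have hw : ((-b', a') : ℝ × ℝ) ≠ (0, 0) := fun h0 => hab' (by
    simp only [Prod.mk.injEq, neg_eq_zero] at h0 ⊢; exact h0.symm)
  exact lineSet_eq_of_orth hab hab' hw ((mem_lineSet_add_iff _ (h hq)).1 (h hdir)) (by ring)
    (h hq) hq

lemma exists_totalDegree_eq_card_vanishesOn (T : Finset (Set (ℝ × ℝ)))
    (hT : ∀ L ∈ T, IsLine L) :
    ∃ f : MvPolynomial (Fin 2) ℝ, f ≠ 0 ∧ f.totalDegree = T.card ∧ ∀ L ∈ T, VanishesOn f L := by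
  classical
  induction T using Finset.induction_on with
  | empty => exact ⟨1, one_ne_zero, totalDegree_one, by simp⟩
  | @insert L T hLT ih =>
    obtain ⟨f, hf, hdeg, hvan⟩ := ih fun L' hL' => hT L' (Finset.mem_insert_of_mem hL')
    obtain ⟨a, b, c, hab, rfl⟩ := hT _ (Finset.mem_insert_self _ _)
    have hℓ := (prime_linForm (c := c) hab).ne_zero
    refine ⟨linForm a b c * f, mul_ne_zero hℓ hf, ?_, ?_⟩
    · rw [totalDegree_mul_of_isDomain hℓ hf, totalDegree_linForm hab, hdeg,
        Finset.card_insert_of_notMem hLT, add_comm]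
    · refine (Finset.forall_mem_insert _ _ _).2 ⟨?_, fun L' hL' => (hvan L' hL').of_dvd ?_⟩
      · exact (vanishesOn_linForm a b c).of_dvd (dvd_mul_right _ _)
      · exact dvd_mul_left _ _

lemma card_le_totalDegree_of_vanishesOn {T : Finset (Set (ℝ × ℝ))} (hT : ∀ L ∈ T, IsLine L)
    {f : MvPolynomial (Fin 2) ℝ} (hf : f ≠ 0) (hvan : ∀ L ∈ T, VanishesOn f L) :
    T.card ≤ f.totalDegree := by
  classical
  induction T using Finset.induction_on generalizing f with
  | empty => simp
  | @insert L T hLT ih =>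
    obtain ⟨a, b, c, hab, rfl⟩ := hT _ (Finset.mem_insert_self _ _)
    obtain ⟨g, rfl⟩ := linForm_dvd hab (hvan _ (Finset.mem_insert_self _ _))
    have hℓ := (prime_linForm (c := c) hab).ne_zero
    have hg : g ≠ 0 := right_ne_zero_of_mul hf
    have hvan' : ∀ L' ∈ T, VanishesOn g L' := by
      intro L' hL'
      obtain ⟨a', b', c', hab', rfl⟩ := hT _ (Finset.mem_insert_of_mem hL')
      have hndvd : ¬linForm a' b' c' ∣ linForm a b c := fun hdvd => hLT <| by
        rwa [lineSet_eq_of_subset hab hab'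
          (vanishesOn_linForm_iff.1 ((vanishesOn_linForm a' b' c').of_dvd hdvd))]
      have hdvd := (prime_linForm hab').dvd_or_dvd
        (linForm_dvd hab' (hvan _ (Finset.mem_insert_of_mem hL')))
      exact (vanishesOn_linForm a' b' c').of_dvd (hdvd.resolve_left hndvd)
    rw [totalDegree_mul_of_isDomain hℓ hg, totalDegree_linForm hab,
      Finset.card_insert_of_notMem hLT, add_comm]
    exact Nat.add_le_add_left (ih (fun L hL => hT L (Finset.mem_insert_of_mem hL)) hg hvan') 1

lemma isParallelVF_iff {P Q : MvPolynomial (Fin 2) ℝ} :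
    IsParallelVF P Q ↔ ∃ (w : ℝ × ℝ) (f : MvPolynomial (Fin 2) ℝ),
      w ≠ (0, 0) ∧ f ≠ 0 ∧ P = C w.1 * f ∧ Q = C w.2 * f := by
  constructor
  · rintro ⟨hPQ, v, hv, hvPQ⟩
    rcases ne_or_eq v.1 0 with hv₁ | hv₁
    · have hQ : Q = C (v.2 / v.1) * P := by
        rw [div_eq_inv_mul, C_mul, mul_assoc, ← hvPQ, ← mul_assoc, ← C_mul, inv_mul_cancel₀ hv₁,
          C_1, one_mul]
      refine ⟨(1, v.2 / v.1), P, by simp, fun hP => ?_, by simp, hQ⟩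
      exact hPQ.elim (· hP) (· (by rw [hQ, hP, mul_zero]))
    · have hv₂ : v.2 ≠ 0 := fun h => hv (Prod.ext hv₁ h)
      have hP : P = 0 := by
        simpa [hv₁, hv₂] using hvPQ.symm
      exact ⟨(0, 1), Q, by simp, hPQ.resolve_left (· hP), by simp [hP], by simp⟩
  · rintro ⟨w, f, hw, hf, rfl, rfl⟩
    refine ⟨?_, w, hw, by ring⟩
    by_contra! h
    simp only [mul_eq_zero, hf, or_false, C_eq_zero] at h
    exact hw (Prod.ext h.1 h.2)

lemma totalDegree_C_mul_le (r : ℝ) (f : MvPolynomial (Fin 2) ℝ) :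
    (C r * f).totalDegree ≤ f.totalDegree :=
  (totalDegree_mul _ _).trans (by rw [totalDegree_C, zero_add])

lemma totalDegree_C_mul {r : ℝ} (hr : r ≠ 0) (f : MvPolynomial (Fin 2) ℝ) :
    (C r * f).totalDegree = f.totalDegree := by
  rcases eq_or_ne f 0 with rfl | hf
  · rw [mul_zero]
  · rw [totalDegree_mul_of_isDomain (C_ne_zero.2 hr) hf, totalDegree_C, zero_add]

lemma max_totalDegree_C_mul {w : ℝ × ℝ} (hw : w ≠ (0, 0)) (f : MvPolynomial (Fin 2) ℝ) :
    max (C w.1 * f).totalDegree (C w.2 * f).totalDegree = f.totalDegree := by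
  refine le_antisymm (max_le (totalDegree_C_mul_le _ _) (totalDegree_C_mul_le _ _)) ?_
  rcases ne_or_eq w.1 0 with h₁ | h₁
  · exact (totalDegree_C_mul h₁ f).ge.trans (le_max_left _ _)
  · exact (totalDegree_C_mul (fun h₂ => hw (Prod.ext h₁ h₂)) f).ge.trans (le_max_right _ _)

lemma invLine_C_mul_iff {w : ℝ × ℝ} {f : MvPolynomial (Fin 2) ℝ} {L : Set (ℝ × ℝ)} :
    InvLine (C w.1 * f) (C w.2 * f) L ↔ ∃ a b c : ℝ, (a, b) ≠ (0, 0) ∧ L = lineSet a b c ∧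
      (a * w.1 + b * w.2 = 0 ∨ VanishesOn f L) := by
  refine exists_congr fun a => exists_congr fun b => exists_congr fun c =>
    and_congr_right fun _ => and_congr_right fun _ => ?_
  have key (q : ℝ × ℝ) : a * pev (C w.1 * f) q + b * pev (C w.2 * f) q =
      (a * w.1 + b * w.2) * pev f q := by
    simp only [pev_mul, pev_C]; ring
  simp only [key, mul_eq_zero]
  exact ⟨fun h => or_iff_not_imp_left.2 fun hw q hq => (h q hq).resolve_left hw,
    fun h q hq => h.imp id fun hf => hf q hq⟩

lemma parLines_of_invLine_C_mul {w : ℝ × ℝ} (hw : w ≠ (0, 0)) {f : MvPolynomial (Fin 2) ℝ}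
    {L L' : Set (ℝ × ℝ)} (hL : InvLine (C w.1 * f) (C w.2 * f) L)
    (hL' : InvLine (C w.1 * f) (C w.2 * f) L') (hfL : ¬VanishesOn f L)
    (hfL' : ¬VanishesOn f L') : ParLines L L' := by
  obtain ⟨a, b, c, hab, rfl, hw₁⟩ := invLine_C_mul_iff.1 hL
  obtain ⟨a', b', c', hab', rfl, hw₂⟩ := invLine_C_mul_iff.1 hL'
  exact parLines_of_orth hab hab' hw (hw₁.resolve_right hfL) (hw₂.resolve_right hfL')

lemma exists_direction_of_pairwise_parLines {S : Finset (Set (ℝ × ℝ))} (hS : ∀ L ∈ S, IsLine L)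
    (hpar : ∀ L ∈ S, ∀ L' ∈ S, ParLines L L') :
    ∃ w : ℝ × ℝ, w ≠ (0, 0) ∧ ∀ L ∈ S, ∀ a b c : ℝ, (a, b) ≠ (0, 0) → L = lineSet a b c →
      a * w.1 + b * w.2 = 0 := by
  rcases S.eq_empty_or_nonempty with rfl | ⟨L₀, hL₀⟩
  · exact ⟨(1, 0), by simp, by simp⟩
  obtain ⟨a₀, b₀, c₀, hab₀, rfl⟩ := hS _ hL₀
  refine ⟨(-b₀, a₀), fun h => hab₀ ?_, fun L hL a b c hab hLabc => ?_⟩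
  · simp only [Prod.mk.injEq, neg_eq_zero] at h ⊢
    exact h.symm
  · subst hLabc
    exact orth_of_parLines hab₀ (hpar _ hL₀ _ hL)

lemma pArr_set_bddAbove (A : Finset (Set (ℝ × ℝ))) :
    BddAbove {k : ℕ | ∃ S : Finset (Set (ℝ × ℝ)), S ⊆ A ∧
      (∀ L ∈ S, ∀ L' ∈ S, ParLines L L') ∧ S.card = k} :=
  ⟨A.card, by rintro k ⟨S, hS, -, rfl⟩; exact Finset.card_le_card hS⟩

lemma card_le_pArr {A S : Finset (Set (ℝ × ℝ))} (hS : S ⊆ A)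
    (hpar : ∀ L ∈ S, ∀ L' ∈ S, ParLines L L') : S.card ≤ pArr A :=
  le_csSup (pArr_set_bddAbove A) ⟨S, hS, hpar, rfl⟩

lemma exists_card_eq_pArr (A : Finset (Set (ℝ × ℝ))) :
    ∃ S : Finset (Set (ℝ × ℝ)), S ⊆ A ∧ (∀ L ∈ S, ∀ L' ∈ S, ParLines L L') ∧ S.card = pArr A :=
  Nat.sSup_mem (by exact ⟨0, ∅, Finset.empty_subset _, by simp, rfl⟩) (pArr_set_bddAbove A)

theorem parallel_minimal_degree_general
    (A : Finset (Set (ℝ × ℝ))) (hA : ∀ L ∈ A, IsLine L) :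
    (∃ P Q : MvPolynomial (Fin 2) ℝ, IsParallelVF P Q ∧
        max P.totalDegree Q.totalDegree = A.card - pArr A ∧
        ∀ L ∈ A, InvLine P Q L) ∧
    (∀ P Q : MvPolynomial (Fin 2) ℝ, IsParallelVF P Q → (∀ L ∈ A, InvLine P Q L) →
        A.card - pArr A ≤ max P.totalDegree Q.totalDegree) := by
  classical
  refine ⟨?_, fun P Q hPQ hinv => ?_⟩
  · obtain ⟨S, hSA, hSpar, hScard⟩ := exists_card_eq_pArr A
    obtain ⟨w, hw, hSw⟩ := exists_direction_of_pairwise_parLines (fun L hL => hA L (hSA hL)) hSpar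
    obtain ⟨f, hf, hfdeg, hfvan⟩ := exists_totalDegree_eq_card_vanishesOn (A \ S)
      fun L hL => hA L (Finset.sdiff_subset hL)
    refine ⟨C w.1 * f, C w.2 * f, isParallelVF_iff.2 ⟨w, f, hw, hf, rfl, rfl⟩, ?_, fun L hL => ?_⟩
    · rw [max_totalDegree_C_mul hw, hfdeg, Finset.card_sdiff_of_subset hSA, hScard]
    · obtain ⟨a, b, c, hab, hLabc⟩ := hA L hL
      refine invLine_C_mul_iff.2 ⟨a, b, c, hab, hLabc, ?_⟩
      by_cases hLS : L ∈ S
      · exact Or.inl (hSw L hLS a b c hab hLabc)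
      · exact Or.inr (hfvan L (Finset.mem_sdiff.2 ⟨hL, hLS⟩))
  · obtain ⟨w, f, hw, hf, rfl, rfl⟩ := isParallelVF_iff.1 hPQ
    have hvan : (A.filter (VanishesOn f)).card ≤ f.totalDegree :=
      card_le_totalDegree_of_vanishesOn (fun L hL => hA L (Finset.mem_filter.1 hL).1) hf
        fun L hL => (Finset.mem_filter.1 hL).2
    have hpar : (A.filter (¬VanishesOn f ·)).card ≤ pArr A := by
      refine card_le_pArr (Finset.filter_subset _ _) fun L hL L' hL' => ?_
      rw [Finset.mem_filter] at hL hL'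
      exact parLines_of_invLine_C_mul hw (hinv L hL.1) (hinv L' hL'.1) hL.2 hL'.2
    have hsplit := Finset.card_filter_add_card_filter_not (s := A) (VanishesOn f)
    rw [max_totalDegree_C_mul hw]
    omega

/-- **Proposition.** The minimal degree of a nonzero parallel vector field fixing a
nonempty line arrangement `A` with `n` lines is exactly `n - p(A)`: such a parallel
vector field of degree `n - p(A)` exists, and every nonzero parallel vector field
fixing `A` has degree at least `n - p(A)`. -/
theorem parallel_minimal_degree
    (A : Finset (Set (ℝ × ℝ))) (hA : ∀ L ∈ A, IsLine L) (hne : A.Nonempty) :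
    (∃ P Q : MvPolynomial (Fin 2) ℝ, IsParallelVF P Q ∧
        max P.totalDegree Q.totalDegree = A.card - pArr A ∧
        ∀ L ∈ A, InvLine P Q L) ∧
    (∀ P Q : MvPolynomial (Fin 2) ℝ, IsParallelVF P Q → (∀ L ∈ A, InvLine P Q L) →
        A.card - pArr A ≤ max P.totalDegree Q.totalDegree) :=
  parallel_minimal_degree_general A hA
end
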